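/- Let H be a Hilbert space, μ > 0, K ⊂ H closed convex, and let G, H_T be bounded self-adjoint operators on H with operator norms at most C. If z̄ and ḡ are the minimizers over K of (1/2)‖Gz - u_d‖² + (μ/2)‖z‖² and (1/2)‖H_T z - u_d‖² + (μ/2)‖z‖² respectively, then μ‖z̄ - ḡ‖² ≤ (‖(G - H_T)(G z̄)‖ + C‖(G - H_T) z̄‖ + ‖(H_T - G) u_d‖)·‖z̄ - ḡ‖. -/
import Mathlib


open scoped RealInnerProductSpace

/-- Variational inequality satisfied by the minimizer of a quadratic functional
over a convex set. -/
lemma quadratic_var_ineq {H : Type*} [NormedAddCommGroup H]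
    [InnerProductSpace ℝ H]
    (A : H →L[ℝ] H) (ud : H) (μ : ℝ) (hμ : 0 < μ)
    (K : Set H) (hcv : Convex ℝ K) (z : H) (hz : z ∈ K)
    (hmin : ∀ w ∈ K,
      (1 / 2) * ‖A z - ud‖ ^ 2 + (μ / 2) * ‖z‖ ^ 2 ≤
        (1 / 2) * ‖A w - ud‖ ^ 2 + (μ / 2) * ‖w‖ ^ 2)
    (w : H) (hw : w ∈ K) :
    0 ≤ ⟪A z - ud, A (w - z)⟫ + μ * ⟪z, w - z⟫ := by
  set d := w - z with hd
  set a : ℝ := ⟪A z - ud, A d⟫ + μ * ⟪z, d⟫ with ha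
  set b : ℝ := ‖A d‖ ^ 2 + μ * ‖d‖ ^ 2 with hb
  have hb0 : 0 ≤ b := by positivity
  have expand : ∀ (x y : H) (t : ℝ),
      ‖x + t • y‖ ^ 2 = ‖x‖ ^ 2 + 2 * t * ⟪x, y⟫ + t ^ 2 * ‖y‖ ^ 2 := by
    intro x y t
    rw [norm_add_sq_real, real_inner_smul_right, norm_smul, mul_pow, Real.norm_eq_abs, sq_abs]
    ring
  have key : ∀ t : ℝ, 0 < t → t ≤ 1 → 0 ≤ t * a + t ^ 2 / 2 * b := by
    intro t ht0 ht1
    have hmem : z + t • d ∈ K := by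
      have h := hcv hz hw (by linarith : (0:ℝ) ≤ 1 - t) ht0.le (by ring)
      have : (1 - t) • z + t • w = z + t • d := by
        rw [hd]; module
      rwa [this] at h
    have hle := hmin _ hmem
    have h1 : A (z + t • d) - ud = (A z - ud) + t • A d := by
      rw [map_add, map_smul]; abel
    rw [h1, expand, show z + t • d = z + t • d from rfl, expand] at hle
    nlinarith [hle]
  by_contra hcon
  push_neg at hcon
  set t : ℝ := min 1 (-a / (b + 1)) with htdef
  have hbpos : (0:ℝ) < b + 1 := by linarith
  have ht0 : 0 < t := lt_min one_pos (div_pos (by linarith) hbpos)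
  have ht1 : t ≤ 1 := min_le_left _ _
  have ht2 : t ≤ -a / (b + 1) := min_le_right _ _
  have htb : t * (b + 1) ≤ -a := by
    rw [div_eq_mul_inv] at ht2
    calc t * (b + 1) ≤ (-a * (b + 1)⁻¹) * (b + 1) :=
          mul_le_mul_of_nonneg_right ht2 hbpos.le
      _ = -a := by field_simp
  have hk := key t ht0 ht1
  nlinarith [mul_pos ht0 ht0, mul_nonneg ht0.le hb0,
    mul_le_mul_of_nonneg_right ht1 (mul_nonneg ht0.le hb0)]

/-- With `G, H_T` bounded self-adjoint operators of norm at most `C`, and `z̄, ḡ`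
the minimizers over a closed convex `K` of the corresponding quadratic
functionals, one has
`μ‖z̄ - ḡ‖² ≤ (‖(G - H_T)(Gz̄)‖ + C‖(G - H_T)z̄‖ + ‖(H_T - G)u_d‖)‖z̄ - ḡ‖`. -/
theorem quantitative_perturbation_estimate {H : Type*} [NormedAddCommGroup H]
    [InnerProductSpace ℝ H] [CompleteSpace H]
    (G HT : H →L[ℝ] H)
    (hG : ∀ x y : H, ⟪G x, y⟫ = ⟪x, G y⟫)
    (hHT : ∀ x y : H, ⟪HT x, y⟫ = ⟪x, HT y⟫)
    (C : ℝ) (hGC : ‖G‖ ≤ C) (hHTC : ‖HT‖ ≤ C)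
    (ud : H) (μ : ℝ) (hμ : 0 < μ)
    (K : Set H) (hne : K.Nonempty) (hcl : IsClosed K) (hcv : Convex ℝ K)
    (zbar gbar : H) (hz : zbar ∈ K) (hg : gbar ∈ K)
    (hzmin : ∀ w ∈ K,
      (1 / 2) * ‖G zbar - ud‖ ^ 2 + (μ / 2) * ‖zbar‖ ^ 2 ≤
        (1 / 2) * ‖G w - ud‖ ^ 2 + (μ / 2) * ‖w‖ ^ 2)
    (hgmin : ∀ w ∈ K,
      (1 / 2) * ‖HT gbar - ud‖ ^ 2 + (μ / 2) * ‖gbar‖ ^ 2 ≤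
        (1 / 2) * ‖HT w - ud‖ ^ 2 + (μ / 2) * ‖w‖ ^ 2) :
    μ * ‖zbar - gbar‖ ^ 2 ≤
      (‖(G - HT) (G zbar)‖ + C * ‖(G - HT) zbar‖ + ‖(HT - G) ud‖) *
        ‖zbar - gbar‖ := by
  set e := zbar - gbar with he
  have h1 := quadratic_var_ineq G ud μ hμ K hcv zbar hz hzmin gbar hg
  have h2 := quadratic_var_ineq HT ud μ hμ K hcv gbar hg hgmin zbar hz
  -- self-adjointness rewrites
  have h1' : 0 ≤ ⟪G (G zbar - ud), gbar - zbar⟫ + μ * ⟪zbar, gbar - zbar⟫ := by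
    rwa [hG (G zbar - ud) (gbar - zbar)]
  have h2' : 0 ≤ ⟪HT (HT gbar - ud), zbar - gbar⟫ + μ * ⟪gbar, zbar - gbar⟫ := by
    rwa [hHT (HT gbar - ud) (zbar - gbar)]
  have hip : ⟪zbar, gbar - zbar⟫ + ⟪gbar, zbar - gbar⟫ = -‖e‖ ^ 2 := by
    rw [he, ← real_inner_self_eq_norm_sq]
    simp only [inner_sub_left, inner_sub_right]
    rw [real_inner_comm gbar zbar]
    ring
  -- main inequality: μ‖e‖² ≤ ⟪G(Gz̄-ud) - HT(HTḡ-ud), ḡ-z̄⟫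
  have hmain : μ * ‖e‖ ^ 2 ≤
      ⟪G (G zbar - ud) - HT (HT gbar - ud), gbar - zbar⟫ := by
    have : ⟪G (G zbar - ud) - HT (HT gbar - ud), gbar - zbar⟫ =
        ⟪G (G zbar - ud), gbar - zbar⟫ + ⟪HT (HT gbar - ud), zbar - gbar⟫ := by
      simp only [inner_sub_left, inner_sub_right]; ring
    nlinarith [h1', h2', hip]
  -- decomposition
  have hdec : G (G zbar - ud) - HT (HT gbar - ud) =
      (G - HT) (G zbar) + HT ((G - HT) zbar) + HT (HT e) - ((G - HT) ud) := by
    simp only [ContinuousLinearMap.sub_apply, map_sub, he]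
    abel
  have hsign : ⟪HT (HT e), gbar - zbar⟫ ≤ 0 := by
    have h3 : gbar - zbar = -e := by rw [he]; abel
    rw [h3, inner_neg_right, hHT (HT e) e]
    simp only [neg_nonpos]
    exact real_inner_self_nonneg
  have hC0 : 0 ≤ C := le_trans (norm_nonneg G) hGC
  -- bound each term
  have hb1 : ⟪(G - HT) (G zbar), gbar - zbar⟫ ≤ ‖(G - HT) (G zbar)‖ * ‖e‖ := by
    calc ⟪(G - HT) (G zbar), gbar - zbar⟫ ≤ ‖(G - HT) (G zbar)‖ * ‖gbar - zbar‖ :=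
          real_inner_le_norm _ _
      _ = ‖(G - HT) (G zbar)‖ * ‖e‖ := by rw [he, norm_sub_rev]
  have hb2 : ⟪HT ((G - HT) zbar), gbar - zbar⟫ ≤ C * ‖(G - HT) zbar‖ * ‖e‖ := by
    calc ⟪HT ((G - HT) zbar), gbar - zbar⟫
        ≤ ‖HT ((G - HT) zbar)‖ * ‖gbar - zbar‖ := real_inner_le_norm _ _
      _ ≤ (C * ‖(G - HT) zbar‖) * ‖gbar - zbar‖ := by
          apply mul_le_mul_of_nonneg_right _ (norm_nonneg _)
          exact le_trans (HT.le_opNorm _)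
            (mul_le_mul_of_nonneg_right hHTC (norm_nonneg _))
      _ = C * ‖(G - HT) zbar‖ * ‖e‖ := by rw [he, norm_sub_rev]
  have hb3 : ⟪-((G - HT) ud), gbar - zbar⟫ ≤ ‖(HT - G) ud‖ * ‖e‖ := by
    have hn : ‖-((G - HT) ud)‖ = ‖(HT - G) ud‖ := by
      rw [norm_neg]
      simp only [ContinuousLinearMap.sub_apply]
      exact norm_sub_rev _ _
    calc ⟪-((G - HT) ud), gbar - zbar⟫ ≤ ‖-((G - HT) ud)‖ * ‖gbar - zbar‖ :=
          real_inner_le_norm _ _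
      _ = ‖(HT - G) ud‖ * ‖e‖ := by rw [hn, he, norm_sub_rev]
  have hsplit : ⟪G (G zbar - ud) - HT (HT gbar - ud), gbar - zbar⟫ =
      ⟪(G - HT) (G zbar), gbar - zbar⟫ + ⟪HT ((G - HT) zbar), gbar - zbar⟫ +
        ⟪HT (HT e), gbar - zbar⟫ + ⟪-((G - HT) ud), gbar - zbar⟫ := by
    rw [hdec]
    simp only [inner_add_left, inner_sub_left, inner_neg_left]
    ring
  rw [← he] at *
  linarith [hmain, hsplit ▸ hmain, hb1, hb2, hb3, hsign]
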